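/- arXiv:1403.6329 — 3 statements merged into one kernel-verified Lean document; each statement's English description precedes it below -/
import Mathlib

section
/- If events B and C are independent (with 0 < P(B) < 1 and 0 < P(C) < 1), and P(A|B∩C) > P(A|Bᶜ∩C) and P(A|B∩Cᶜ) > P(A|Bᶜ∩Cᶜ), then P(A|B) > P(A|Bᶜ). In other words, Simpson's paradox cannot occur when B and C are independent. -/
/-!
By the law of total probability, `P(A | B)` is the average of `P(A | B ∩ C)` and
`P(A | B ∩ Cᶜ)` with weights `P(C | B)` and `P(Cᶜ | B)`, and likewise for `Bᶜ`. Independence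
of `B` and `C` makes both pairs of weights equal to `P(C), P(Cᶜ)`, so the two
stratum-wise inequalities survive the averaging.
-/

open MeasureTheory

/-- The conditional probability `P(A | B) = P(A ∩ B) / P(B)` (as a real number). -/
noncomputable def condProb {Ω : Type*} [MeasurableSpace Ω] (μ : Measure Ω)
    (A B : Set Ω) : ℝ :=
  (μ (A ∩ B)).toReal / (μ B).toReal

open ProbabilityTheory

lemma add_mul_lt_add_mul_of_lt_of_lt {a b x₁ x₂ y₁ y₂ : ℝ} (ha : 0 ≤ a) (hb : 0 ≤ b)
    (hab : 0 < a + b) (h₁ : y₁ < x₁) (h₂ : y₂ < x₂) :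
    a * y₁ + b * y₂ < a * x₁ + b * x₂ := by
  rcases ha.eq_or_lt with rfl | ha
  · simp only [zero_add, zero_mul] at hab ⊢
    exact mul_lt_mul_of_pos_left h₂ hab
  · exact add_lt_add_of_lt_of_le (mul_lt_mul_of_pos_left h₁ ha)
      (mul_le_mul_of_nonneg_left h₂.le hb)

namespace ProbabilityTheory

open MeasurableSpace

variable {Ω : Type*} [MeasurableSpace Ω] {μ : Measure Ω} {s t : Set Ω}

lemma IndepSet.compl_left (h : IndepSet s t μ) : IndepSet sᶜ t μ :=
  Indep.indepSet_of_measurableSet h (measurableSet_generateFrom (Set.mem_singleton s)).compl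
    (measurableSet_generateFrom (Set.mem_singleton t))

lemma IndepSet.compl_right (h : IndepSet s t μ) : IndepSet s tᶜ μ :=
  Indep.indepSet_of_measurableSet h (measurableSet_generateFrom (Set.mem_singleton s))
    (measurableSet_generateFrom (Set.mem_singleton t)).compl

end ProbabilityTheory

section condProb

variable {Ω : Type*} [MeasurableSpace Ω] {μ : Measure Ω} [IsFiniteMeasure μ]

lemma condProb_eq_of_indepSet {s t : Set Ω} (h : IndepSet s t μ) (hs : μ s ≠ 0) :
    condProb μ t s = μ.real t := by
  rw [condProb, Set.inter_comm, h.measure_inter_eq_mul, ENNReal.toReal_mul]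
  exact mul_div_cancel_left₀ _ ((measureReal_ne_zero_iff).2 hs)

-- When `μ (s ∩ t) = 0` the junk value `condProb μ A (s ∩ t) = 0` makes both sides vanish.
lemma condProb_mul_condProb_inter (A s t : Set Ω) :
    condProb μ t s * condProb μ A (s ∩ t) = μ.real (A ∩ (s ∩ t)) / μ.real s := by
  simp only [condProb, ← measureReal_def, Set.inter_comm t s]
  by_cases hst : μ.real (s ∩ t) = 0
  · have hA : μ.real (A ∩ (s ∩ t)) = 0 :=
      le_antisymm (hst ▸ measureReal_mono Set.inter_subset_right) measureReal_nonneg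
    rw [hst, hA]
    simp
  · field_simp

lemma condProb_eq_add_condProb {C : Set Ω} (hC : MeasurableSet C) (A s : Set Ω) :
    condProb μ A s =
      condProb μ C s * condProb μ A (s ∩ C) +
        condProb μ Cᶜ s * condProb μ A (s ∩ Cᶜ) := by
  rw [condProb_mul_condProb_inter, condProb_mul_condProb_inter, ← add_div, condProb,
    ← measureReal_def, ← measureReal_def, ← Set.inter_assoc, ← Set.inter_assoc,
    ← Set.sdiff_eq, measureReal_inter_add_sdiff hC]

end condProb

theorem no_simpson_of_indep_general {Ω : Type*} [MeasurableSpace Ω] (μ : Measure Ω)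
    [IsProbabilityMeasure μ] (A B C : Set Ω)
    (hB : MeasurableSet B) (hC : MeasurableSet C)
    (hindep : μ (B ∩ C) = μ B * μ C)
    (hB0 : 0 < μ B) (hB1 : μ B < 1)
    (hc1 : condProb μ A (B ∩ C) > condProb μ A (Bᶜ ∩ C))
    (hc2 : condProb μ A (B ∩ Cᶜ) > condProb μ A (Bᶜ ∩ Cᶜ)) :
    condProb μ A B > condProb μ A Bᶜ := by
  have hBC : IndepSet B C μ := (indepSet_iff_measure_inter_eq_mul hB hC μ).2 hindep
  have hBc0 : μ Bᶜ ≠ 0 := by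
    rw [prob_compl_eq_one_sub hB]
    exact (tsub_pos_of_lt hB1).ne'
  rw [gt_iff_lt, condProb_eq_add_condProb hC A B, condProb_eq_add_condProb hC A Bᶜ,
    condProb_eq_of_indepSet hBC hB0.ne', condProb_eq_of_indepSet hBC.compl_right hB0.ne',
    condProb_eq_of_indepSet hBC.compl_left hBc0,
    condProb_eq_of_indepSet hBC.compl_left.compl_right hBc0]
  exact add_mul_lt_add_mul_of_lt_of_lt measureReal_nonneg measureReal_nonneg
    ((probReal_add_probReal_compl (μ := μ) hC).symm ▸ one_pos) hc1 hc2

/-- Simpson's paradox cannot occur when `B` and `C` are independent: if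
`P(B∩C) = P(B)P(C)`, `0 < P(B) < 1`, `0 < P(C) < 1`, all four intersections
`B∩C, B∩Cᶜ, Bᶜ∩C, Bᶜ∩Cᶜ` have positive probability, and
`P(A|B∩C) > P(A|Bᶜ∩C)` and `P(A|B∩Cᶜ) > P(A|Bᶜ∩Cᶜ)`, then `P(A|B) > P(A|Bᶜ)`. -/
theorem no_simpson_of_indep {Ω : Type*} [MeasurableSpace Ω] (μ : Measure Ω)
    [IsProbabilityMeasure μ] (A B C : Set Ω)
    (hA : MeasurableSet A) (hB : MeasurableSet B) (hC : MeasurableSet C)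
    (hindep : μ (B ∩ C) = μ B * μ C)
    (hB0 : 0 < μ B) (hB1 : μ B < 1) (hC0 : 0 < μ C) (hC1 : μ C < 1)
    (h1 : 0 < μ (B ∩ C)) (h2 : 0 < μ (B ∩ Cᶜ))
    (h3 : 0 < μ (Bᶜ ∩ C)) (h4 : 0 < μ (Bᶜ ∩ Cᶜ))
    (hc1 : condProb μ A (B ∩ C) > condProb μ A (Bᶜ ∩ C))
    (hc2 : condProb μ A (B ∩ Cᶜ) > condProb μ A (Bᶜ ∩ Cᶜ)) :
    condProb μ A B > condProb μ A Bᶜ :=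
  no_simpson_of_indep_general μ A B C hB hC hindep hB0 hB1 hc1 hc2
end

section
/- If events B and C are independent and C and Bᶜ are independent, with all four intersections B∩C, B∩Cᶜ, Bᶜ∩C, Bᶜ∩Cᶜ of positive probability, and P(A|B∩C) ≥ P(A|Bᶜ∩C) and P(A|B∩Cᶜ) ≥ P(A|Bᶜ∩Cᶜ) with at least one inequality strict, then P(A|B) > P(A|Bᶜ). -/
open MeasureTheory

/-!
If `C` is independent of both `B` and `Bᶜ`, the law of total probability gives
`P(A|B) = P(A|B∩C) P(C) + P(A|B∩Cᶜ) P(Cᶜ)` and the same for `Bᶜ`, with the *same* weights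
`P(C)` and `P(Cᶜ)`. The two conditional probabilities are therefore convex combinations of the
stratified ones with common positive weights, and termwise domination with one strict term
gives a strict inequality: no Simpson reversal can occur.
-/

section

variable {Ω : Type*} [MeasurableSpace Ω] {μ : Measure Ω} {A B C : Set Ω}

lemma condProb_eq_measureReal_div : condProb μ A B = μ.real (A ∩ B) / μ.real B := rfl

-- For a null set `B` both sides vanish, since `x / 0 = 0`.
lemma condProb_mul_measureReal [IsFiniteMeasure μ] :
    condProb μ A B * μ.real B = μ.real (A ∩ B) := by
  rcases eq_or_ne (μ.real B) 0 with hB | hB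
  · rw [hB, mul_zero, measureReal_mono_null Set.inter_subset_right hB]
  · exact div_mul_cancel₀ _ hB

lemma measureReal_inter_eq_condProb_mul_add [IsFiniteMeasure μ] (hC : MeasurableSet C) :
    μ.real (A ∩ B) = condProb μ A (B ∩ C) * μ.real (B ∩ C)
      + condProb μ A (B ∩ Cᶜ) * μ.real (B ∩ Cᶜ) := by
  rw [condProb_mul_measureReal, condProb_mul_measureReal,
    ← measureReal_inter_add_sdiff hC (s := A ∩ B), Set.sdiff_eq, Set.inter_assoc,
    Set.inter_assoc]

lemma measureReal_inter_eq_mul_of_measure_inter (hindep : μ (B ∩ C) = μ B * μ C) :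
    μ.real (B ∩ C) = μ.real B * μ.real C := by
  simp only [measureReal_def, hindep, ENNReal.toReal_mul]

lemma measureReal_inter_compl_eq_mul_of_measure_inter [IsProbabilityMeasure μ]
    (hC : MeasurableSet C) (hindep : μ (B ∩ C) = μ B * μ C) :
    μ.real (B ∩ Cᶜ) = μ.real B * μ.real Cᶜ := by
  have hsplit := measureReal_inter_add_sdiff hC (μ := μ) (s := B)
  rw [Set.sdiff_eq, measureReal_inter_eq_mul_of_measure_inter hindep] at hsplit
  rw [probReal_compl_eq_one_sub hC]
  linarith

lemma condProb_eq_add_of_measure_inter_eq_mul [IsProbabilityMeasure μ] (hC : MeasurableSet C)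
    (hindep : μ (B ∩ C) = μ B * μ C) :
    condProb μ A B = condProb μ A (B ∩ C) * μ.real C + condProb μ A (B ∩ Cᶜ) * μ.real Cᶜ := by
  rcases eq_or_ne (μ.real B) 0 with hB | hB
  · have hBC : μ.real (B ∩ C) = 0 := measureReal_mono_null Set.inter_subset_left hB
    have hBCc : μ.real (B ∩ Cᶜ) = 0 := measureReal_mono_null Set.inter_subset_left hB
    simp only [condProb_eq_measureReal_div, hB, hBC, hBCc, div_zero, zero_mul, add_zero]
  · rw [condProb_eq_measureReal_div, measureReal_inter_eq_condProb_mul_add hC,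
      measureReal_inter_eq_mul_of_measure_inter hindep,
      measureReal_inter_compl_eq_mul_of_measure_inter hC hindep]
    field_simp

lemma measureReal_pos_of_inter_pos [IsFiniteMeasure μ] (h : 0 < μ (B ∩ C)) : 0 < μ.real C :=
  ENNReal.toReal_pos (h.trans_le (measure_mono Set.inter_subset_right)).ne' (measure_ne_top μ C)

end

lemma mul_add_mul_lt_mul_add_mul_of_pos_weights {α : Type*} [Semiring α] [PartialOrder α]
    [IsStrictOrderedRing α] {a b a' b' s t : α} (hs : 0 < s) (ht : 0 < t)
    (ha : a' ≤ a) (hb : b' ≤ b) (hlt : a' < a ∨ b' < b) :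
    a' * s + b' * t < a * s + b * t := by
  rcases hlt with ha' | hb'
  · exact add_lt_add_of_lt_of_le (mul_lt_mul_of_pos_right ha' hs)
      (mul_le_mul_of_nonneg_right hb ht.le)
  · exact add_lt_add_of_le_of_lt (mul_le_mul_of_nonneg_right ha hs.le)
      (mul_lt_mul_of_pos_right hb' ht)

theorem no_simpson_of_indep_strict_general {Ω : Type*} [MeasurableSpace Ω] (μ : Measure Ω)
    [IsProbabilityMeasure μ] (A B C : Set Ω)
    (hC : MeasurableSet C)
    (hindep : μ (B ∩ C) = μ B * μ C)
    (hindep' : μ (Bᶜ ∩ C) = μ Bᶜ * μ C)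
    (h1 : 0 < μ (B ∩ C)) (h2 : 0 < μ (B ∩ Cᶜ))
    (hc1 : condProb μ A (B ∩ C) ≥ condProb μ A (Bᶜ ∩ C))
    (hc2 : condProb μ A (B ∩ Cᶜ) ≥ condProb μ A (Bᶜ ∩ Cᶜ))
    (hstrict : condProb μ A (B ∩ C) > condProb μ A (Bᶜ ∩ C) ∨
               condProb μ A (B ∩ Cᶜ) > condProb μ A (Bᶜ ∩ Cᶜ)) :
    condProb μ A B > condProb μ A Bᶜ := by
  rw [condProb_eq_add_of_measure_inter_eq_mul hC hindep,
    condProb_eq_add_of_measure_inter_eq_mul hC hindep']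
  exact mul_add_mul_lt_mul_add_mul_of_pos_weights (measureReal_pos_of_inter_pos h1)
    (measureReal_pos_of_inter_pos h2) hc1 hc2 hstrict

/-- Strengthened non-reversal statement: if `B` and `C` are independent and `Bᶜ` and `C`
are independent, all four intersections have positive probability,
`P(A|B∩C) ≥ P(A|Bᶜ∩C)` and `P(A|B∩Cᶜ) ≥ P(A|Bᶜ∩Cᶜ)` with at least one inequality
strict, then `P(A|B) > P(A|Bᶜ)`. -/
theorem no_simpson_of_indep_strict {Ω : Type*} [MeasurableSpace Ω] (μ : Measure Ω)
    [IsProbabilityMeasure μ] (A B C : Set Ω)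
    (hA : MeasurableSet A) (hB : MeasurableSet B) (hC : MeasurableSet C)
    (hindep : μ (B ∩ C) = μ B * μ C)
    (hindep' : μ (Bᶜ ∩ C) = μ Bᶜ * μ C)
    (h1 : 0 < μ (B ∩ C)) (h2 : 0 < μ (B ∩ Cᶜ))
    (h3 : 0 < μ (Bᶜ ∩ C)) (h4 : 0 < μ (Bᶜ ∩ Cᶜ))
    (hc1 : condProb μ A (B ∩ C) ≥ condProb μ A (Bᶜ ∩ C))
    (hc2 : condProb μ A (B ∩ Cᶜ) ≥ condProb μ A (Bᶜ ∩ Cᶜ))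
    (hstrict : condProb μ A (B ∩ C) > condProb μ A (Bᶜ ∩ C) ∨
               condProb μ A (B ∩ Cᶜ) > condProb μ A (Bᶜ ∩ Cᶜ)) :
    condProb μ A B > condProb μ A Bᶜ :=
  no_simpson_of_indep_strict_general μ A B C hC hindep hindep' h1 h2 hc1 hc2 hstrict
end

section
/- For discrete random variables X, Y, W with W independent of X: if P(Y ≤ y | X = x, W = w) is nonincreasing in x for all y and w, then P(Y ≤ y | X = x) is nonincreasing in x for all y. (No Simpson's paradox / effect reversal under W ⊥ X.) -/
open Classical Finset

/-- Probability of a set of outcomes in a finite probability space with weights `p`. -/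
noncomputable def Pr {Ω : Type*} [Fintype Ω] (p : Ω → ℝ) (S : Set Ω) : ℝ :=
  ∑ ω, if ω ∈ S then p ω else 0

/-- Conditional probability `P(A | B) = P(A ∩ B)/P(B)` in a finite probability space. -/
noncomputable def CPr {Ω : Type*} [Fintype Ω] (p : Ω → ℝ) (A B : Set Ω) : ℝ :=
  Pr p (A ∩ B) / Pr p B

/-!
Independence of `W` and `X` makes the weights `P(W = w | X = x) = P(W = w)` of the law of total
probability `P(Y ≤ y | X = x) = ∑_w P(Y ≤ y | X = x, W = w) P(W = w | X = x)` independent of `x`.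
So `P(Y ≤ y | X = x)` is a mixture, with fixed nonnegative weights, of functions nonincreasing
in `x`.
-/

section FiniteProbability

variable {Ω : Type*} [Fintype Ω] {p : Ω → ℝ}

lemma Pr_nonneg (hp : ∀ ω, 0 ≤ p ω) (S : Set Ω) : 0 ≤ Pr p S :=
  sum_nonneg fun ω _ => by split <;> simp [hp ω]

lemma Pr_pos_of_nonempty (hp : ∀ ω, 0 < p ω) {S : Set Ω} (hS : S.Nonempty) : 0 < Pr p S := by
  obtain ⟨ω₀, hω₀⟩ := hS
  refine sum_pos' (fun ω _ => ?_) ⟨ω₀, mem_univ _, by simp [hω₀, hp ω₀]⟩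
  split <;> simp [(hp ω).le]

lemma Pr_fiber_pos (hp : ∀ ω, 0 < p ω) {β : Type*} (W : Ω → β) {w : β}
    (hw : w ∈ univ.image W) : 0 < Pr p {ω | W ω = w} := by
  obtain ⟨ω, -, rfl⟩ := mem_image.mp hw
  exact Pr_pos_of_nonempty hp ⟨ω, rfl⟩

lemma Pr_eq_sum_Pr_inter_fiber {β : Type*} (W : Ω → β) (A : Set Ω) :
    Pr p A = ∑ w ∈ univ.image W, Pr p (A ∩ {ω | W ω = w}) := by
  rw [Pr, ← sum_fiberwise_of_maps_to (fun ω _ => mem_image_of_mem W (mem_univ ω))]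
  refine sum_congr rfl fun w _ => ?_
  rw [Pr, sum_filter]
  refine sum_congr rfl fun ω _ => ?_
  by_cases hω : W ω = w <;> simp [hω]

lemma CPr_eq_sum_CPr_inter_fiber_mul_of_indep (hp : ∀ ω, 0 < p ω) {β : Type*} (W : Ω → β)
    {A B : Set Ω} (hB : 0 < Pr p B)
    (hindep : ∀ w, Pr p (B ∩ {ω | W ω = w}) = Pr p B * Pr p {ω | W ω = w}) :
    CPr p A B = ∑ w ∈ univ.image W, CPr p A (B ∩ {ω | W ω = w}) * Pr p {ω | W ω = w} := by
  rw [CPr, Pr_eq_sum_Pr_inter_fiber W, sum_div]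
  refine sum_congr rfl fun w hw => ?_
  have hW := Pr_fiber_pos hp W hw
  rw [CPr, hindep, Set.inter_assoc]
  field_simp

end FiniteProbability

theorem no_effect_reversal_of_indep_general {Ω : Type*} [Fintype Ω] (p : Ω → ℝ)
    (hp : ∀ ω, 0 < p ω)
    (X Y W : Ω → ℝ)
    (hindep : ∀ w x, Pr p {ω | W ω = w ∧ X ω = x}
      = Pr p {ω | W ω = w} * Pr p {ω | X ω = x})
    (hmono : ∀ y w x₁ x₂, x₁ ≤ x₂ →
      0 < Pr p {ω | X ω = x₁ ∧ W ω = w} → 0 < Pr p {ω | X ω = x₂ ∧ W ω = w} →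
      CPr p {ω | Y ω ≤ y} {ω | X ω = x₂ ∧ W ω = w} ≤
        CPr p {ω | Y ω ≤ y} {ω | X ω = x₁ ∧ W ω = w}) :
    ∀ y x₁ x₂, x₁ ≤ x₂ →
      0 < Pr p {ω | X ω = x₁} → 0 < Pr p {ω | X ω = x₂} →
      CPr p {ω | Y ω ≤ y} {ω | X ω = x₂} ≤ CPr p {ω | Y ω ≤ y} {ω | X ω = x₁} := by
  intro y x₁ x₂ hx h₁ h₂
  have hindep' : ∀ x w, Pr p ({ω | X ω = x} ∩ {ω | W ω = w})
      = Pr p {ω | X ω = x} * Pr p {ω | W ω = w} := fun x w => by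
    rw [Set.inter_comm, mul_comm]; exact hindep w x
  rw [CPr_eq_sum_CPr_inter_fiber_mul_of_indep hp W h₁ (hindep' x₁),
    CPr_eq_sum_CPr_inter_fiber_mul_of_indep hp W h₂ (hindep' x₂)]
  refine sum_le_sum fun w hw => mul_le_mul_of_nonneg_right ?_ (Pr_nonneg (fun ω => (hp ω).le) _)
  have hW := Pr_fiber_pos hp W hw
  have hpos : ∀ x, 0 < Pr p {ω | X ω = x} → 0 < Pr p ({ω | X ω = x} ∩ {ω | W ω = w}) :=
    fun x hx => by rw [hindep']; positivity
  exact hmono y w x₁ x₂ hx (hpos x₁ h₁) (hpos x₂ h₂)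

/-- Discrete Cox–Wermuth condition for avoiding effect reversal after marginalization:
for discrete random variables `X, Y, W` with `W` independent of `X`, if
`P(Y ≤ y | X = x, W = w)` is nonincreasing in `x` for all `y` and `w`, then
`P(Y ≤ y | X = x)` is nonincreasing in `x` for all `y`. -/
theorem no_effect_reversal_of_indep {Ω : Type*} [Fintype Ω] (p : Ω → ℝ)
    (hp : ∀ ω, 0 < p ω) (hsum : ∑ ω, p ω = 1)
    (X Y W : Ω → ℝ)
    (hindep : ∀ w x, Pr p {ω | W ω = w ∧ X ω = x}
      = Pr p {ω | W ω = w} * Pr p {ω | X ω = x})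
    (hmono : ∀ y w x₁ x₂, x₁ ≤ x₂ →
      0 < Pr p {ω | X ω = x₁ ∧ W ω = w} → 0 < Pr p {ω | X ω = x₂ ∧ W ω = w} →
      CPr p {ω | Y ω ≤ y} {ω | X ω = x₂ ∧ W ω = w} ≤
        CPr p {ω | Y ω ≤ y} {ω | X ω = x₁ ∧ W ω = w}) :
    ∀ y x₁ x₂, x₁ ≤ x₂ →
      0 < Pr p {ω | X ω = x₁} → 0 < Pr p {ω | X ω = x₂} →
      CPr p {ω | Y ω ≤ y} {ω | X ω = x₂} ≤ CPr p {ω | Y ω ≤ y} {ω | X ω = x₁} :=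
  no_effect_reversal_of_indep_general p hp X Y W hindep hmono
end
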